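/- arXiv:2101.02238 — 3 statements merged into one kernel-verified Lean document; each statement's English description precedes it below -/
import Mathlib

section
/- Suppose c : 𝒯 → ℝ is continuously differentiable with c(0) = 0, v : 𝒯 → (0,∞) is continuous, z(t) := ∫₀ᵗ v(s) ds, f : 𝒯 × ℝ → [0,∞) is jointly integrable, and Φ : 𝒯 × ℝ → ℝ is continuously differentiable and satisfies, for all t ∈ 𝒯 and x ∈ ℝ, c(t)·∂ₜΦ(t,x) + c′(t)·Φ(t,x) − c(t)·v(t)·∂ₓΦ(t,x) = ∫ₓ^{X_max} f(t,ξ) dξ. Then for all t ∈ 𝒯 and y ∈ ℝ, c(t)·Φ(t,y) = ∫₀ᵗ ∫_{y + z(t) − z(s)}^{X_max} f(s,ξ) dξ ds. -/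
open MeasureTheory Set

/-! Along the characteristic `s ↦ y + z t - z s`, which moves at speed `-v`, the left-hand side
of the PDE is the derivative of `s ↦ c s * Φ s (y + z t - z s)`. Integrating it from `0`, where
`c` vanishes, to `t`, where the characteristic passes through `y`, gives the formula. -/

section PartialDerivatives

variable {E : Type*} [NormedAddCommGroup E] [NormedSpace ℝ E] {Φ : ℝ → ℝ → E} {s x : ℝ}

theorem deriv_fst_eq_fderiv_uncurry (hΦ : DifferentiableAt ℝ (Function.uncurry Φ) (s, x)) :
    deriv (fun u => Φ u x) s = fderiv ℝ (Function.uncurry Φ) (s, x) (1, 0) :=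
  (hΦ.hasFDerivAt.comp_hasDerivAt s ((hasDerivAt_id' s).prodMk (hasDerivAt_const s x)) :).deriv

theorem deriv_snd_eq_fderiv_uncurry (hΦ : DifferentiableAt ℝ (Function.uncurry Φ) (s, x)) :
    deriv (Φ s) x = fderiv ℝ (Function.uncurry Φ) (s, x) (0, 1) :=
  (hΦ.hasFDerivAt.comp_hasDerivAt x ((hasDerivAt_const x s).prodMk (hasDerivAt_id' x)) :).deriv

theorem hasDerivAt_uncurry_comp {X : ℝ → ℝ} {X' : ℝ}
    (hΦ : DifferentiableAt ℝ (Function.uncurry Φ) (s, X s)) (hX : HasDerivAt X X' s) :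
    HasDerivAt (fun u => Φ u (X u)) (deriv (fun u => Φ u (X s)) s + X' • deriv (Φ s) (X s)) s := by
  have hsplit : ((1 : ℝ), X') = ((1 : ℝ), (0 : ℝ)) + X' • ((0 : ℝ), (1 : ℝ)) := by simp
  rw [deriv_fst_eq_fderiv_uncurry hΦ, deriv_snd_eq_fderiv_uncurry hΦ, ← map_smul, ← map_add,
    ← hsplit]
  exact hΦ.hasFDerivAt.comp_hasDerivAt s ((hasDerivAt_id' s).prodMk hX)

end PartialDerivatives

theorem contDiff_one_integral_of_continuous {v : ℝ → ℝ} (hv : Continuous v) (a : ℝ) :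
    ContDiff ℝ 1 (fun t => ∫ s in a..t, v s) := by
  have hderiv : deriv (fun t => ∫ s in a..t, v s) = v := funext (Continuous.deriv_integral v hv a)
  rw [contDiff_one_iff_deriv, hderiv]
  exact ⟨fun t => (hv.integral_hasStrictDerivAt a t).hasDerivAt.differentiableAt, hv⟩

theorem hasDerivAt_mul_comp_characteristic {c X : ℝ → ℝ} {Φ : ℝ → ℝ → ℝ} {s V : ℝ}
    (hc : DifferentiableAt ℝ c s) (hΦ : DifferentiableAt ℝ (Function.uncurry Φ) (s, X s))
    (hX : HasDerivAt X (-V) s) :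
    HasDerivAt (fun u => c u * Φ u (X u))
      (c s * deriv (fun u => Φ u (X s)) s + deriv c s * Φ s (X s)
        - c s * V * deriv (Φ s) (X s)) s := by
  refine (hc.hasDerivAt.mul (hasDerivAt_uncurry_comp hΦ hX)).congr_deriv ?_
  simp only [smul_eq_mul]
  ring

theorem bathtub_integral_form_general
    (Tmax Xmax : ℝ)
    (c v : ℝ → ℝ) (f : ℝ → ℝ → ℝ) (Φ : ℝ → ℝ → ℝ)
    (hc : ContDiff ℝ 1 c) (hc0 : c 0 = 0)
    (hv : Continuous v)
    (hΦ : ContDiff ℝ 1 (Function.uncurry Φ))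
    (z : ℝ → ℝ) (hz : ∀ t, z t = ∫ s in (0:ℝ)..t, v s)
    (hpde : ∀ t ∈ Set.Icc (0:ℝ) Tmax, ∀ x : ℝ,
      c t * deriv (fun s => Φ s x) t + deriv c t * Φ t x
        - c t * v t * deriv (fun ξ => Φ t ξ) x = ∫ ξ in x..Xmax, f t ξ) :
    ∀ t ∈ Set.Icc (0:ℝ) Tmax, ∀ y : ℝ,
      c t * Φ t y = ∫ s in (0:ℝ)..t, ∫ ξ in (y + z t - z s)..Xmax, f s ξ := by
  intro t ht y
  have hz_eq : z = fun t => ∫ s in (0:ℝ)..t, v s := funext hz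
  set X : ℝ → ℝ := fun s => y + z t - z s
  set g : ℝ → ℝ := fun s => c s * Φ s (X s)
  have hX : ContDiff ℝ 1 X :=
    contDiff_const.sub (hz_eq ▸ contDiff_one_integral_of_continuous hv 0)
  have hX' (s : ℝ) : HasDerivAt X (-v s) s :=
    (hz_eq ▸ (hv.integral_hasStrictDerivAt 0 s).hasDerivAt).const_sub _
  have hg : ContDiff ℝ 1 g := hc.mul (hΦ.comp (contDiff_id.prodMk hX))
  have hg' : EqOn (deriv g) (fun s => ∫ ξ in X s..Xmax, f s ξ) (uIcc 0 t) := by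
    intro s hs
    rw [uIcc_of_le ht.1] at hs
    have hderiv := hasDerivAt_mul_comp_characteristic (hc.differentiable one_ne_zero s)
      (hΦ.differentiable one_ne_zero _) (hX' s)
    rw [hpde s ⟨hs.1, hs.2.trans ht.2⟩ (X s)] at hderiv
    exact hderiv.deriv
  calc c t * Φ t y = g t - g 0 := by simp [g, X, hc0]
    _ = ∫ s in (0:ℝ)..t, deriv g s :=
      (intervalIntegral.integral_deriv_eq_sub (fun s _ => hg.differentiable one_ne_zero s)
        ((hg.continuous_deriv le_rfl).intervalIntegrable 0 t)).symm
    _ = _ := intervalIntegral.integral_congr hg'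

/-- integral form of the generalized bathtub dynamics.
If `c` is continuously differentiable with `c 0 = 0`, `v` is a continuous positive speed,
`z t = ∫₀ᵗ v`, `f` is a nonnegative jointly integrable in-flow density, and `Φ` is
continuously differentiable and satisfies the bathtub PDE
`c t ∂ₜΦ(t,x) + c' t Φ(t,x) − c t v t ∂ₓΦ(t,x) = ∫ₓ^{Xmax} f(t,ξ) dξ` on `𝒯 = [0,Tmax]`,
then `c t Φ(t,y) = ∫₀ᵗ ∫_{y + z t − z s}^{Xmax} f(s,ξ) dξ ds` for all `t ∈ 𝒯`, `y ∈ ℝ`. -/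
theorem bathtub_integral_form
    (Tmax Xmax : ℝ) (hT : 0 < Tmax) (hX : 0 < Xmax)
    (c v : ℝ → ℝ) (f : ℝ → ℝ → ℝ) (Φ : ℝ → ℝ → ℝ)
    (hc : ContDiff ℝ 1 c) (hc0 : c 0 = 0)
    (hv : Continuous v) (hvpos : ∀ t ∈ Set.Icc (0:ℝ) Tmax, 0 < v t)
    (hf0 : ∀ t x, 0 ≤ f t x)
    (hfint : IntegrableOn (Function.uncurry f)
      (Set.Icc (0:ℝ) Tmax ×ˢ (Set.univ : Set ℝ)))
    (hΦ : ContDiff ℝ 1 (Function.uncurry Φ))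
    (z : ℝ → ℝ) (hz : ∀ t, z t = ∫ s in (0:ℝ)..t, v s)
    (hpde : ∀ t ∈ Set.Icc (0:ℝ) Tmax, ∀ x : ℝ,
      c t * deriv (fun s => Φ s x) t + deriv c t * Φ t x
        - c t * v t * deriv (fun ξ => Φ t ξ) x = ∫ ξ in x..Xmax, f t ξ) :
    ∀ t ∈ Set.Icc (0:ℝ) Tmax, ∀ y : ℝ,
      c t * Φ t y = ∫ s in (0:ℝ)..t, ∫ ξ in (y + z t - z s)..Xmax, f s ξ :=
  bathtub_integral_form_general Tmax Xmax c v f Φ hc hc0 hv hΦ z hz hpde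
end

section
/- For every M > 0, every F ∈ 𝒫_{m,G}, and all z₁, z₂ ∈ C(𝒯), one has d_M(𝒰(z₁,F), 𝒰(z₂,F)) ≤ 2·G·Lip(V)·(M·T_max − 1 + e^{−M·T_max})/M² · d_M(z₁, z₂). In particular, for M large enough that 2·G·Lip(V)·(M·T_max − 1 + e^{−M·T_max})/M² < 1, the map z ↦ 𝒰(z,F) is a contraction on (C(𝒯), d_M). -/
open MeasureTheory Set Filter

noncomputable section

/-- `Sset Td Xs z t` is the set `S_t(z)` of pairs (departure time, trip length) of the
agents travelling at time `t` in a system with characteristic travel distance `z`: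
`S_t(z) = {(τ, ξ) : τ ∈ [0,t] ∩ 𝒯_d, ξ ∈ (z(t) − z(τ), ∞) ∩ 𝒳}`. -/
def Sset (Td Xs : Set ℝ) (z : ℝ → ℝ) (t : ℝ) : Set (ℝ × ℝ) :=
  {p : ℝ × ℝ | p.1 ∈ Set.Icc 0 t ∩ Td ∧ p.2 ∈ Set.Ioi (z t - z p.1) ∩ Xs}

/-- `memP Td Xs Ta m G F` says that `F ∈ 𝒫_{m,G}`: `F` is a Borel probability measure
on `𝒯_d × 𝒳` with `F(B) ≤ G·λ₂(B)` for every Borel `B` and whose `𝒳`-marginal agrees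
with that of the demand profile `m`, i.e. `F(𝒯_d × Q) = m(Q × 𝒯_a)` for all Borel `Q`. -/
def memP (Td Xs Ta : Set ℝ) (m : Measure (ℝ × ℝ)) (G : ℝ) (F : Measure (ℝ × ℝ)) : Prop :=
  IsProbabilityMeasure F ∧ F ((Td ×ˢ Xs)ᶜ) = 0 ∧
    (∀ B : Set (ℝ × ℝ), MeasurableSet B → F B ≤ ENNReal.ofReal G * volume B) ∧
    ∀ Q : Set ℝ, MeasurableSet Q → F (Td ×ˢ Q) = m (Q ×ˢ Ta)

/-- The map `𝒰(z, F)(t) = ∫₀ᵗ V(F(S_s(z))) ds`. -/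
def Umap (Td Xs : Set ℝ) (V : ℝ → ℝ) (F : Measure (ℝ × ℝ)) (z : ℝ → ℝ) (t : ℝ) : ℝ :=
  ∫ s in (0:ℝ)..t, V ((F (Sset Td Xs z s)).toReal)

/-- The distance associated with the norm `‖u‖_M = sup_{t ∈ [0,Tmax]} e^{−Mt}|u(t)|`. -/
def dM (M Tmax : ℝ) (u w : ℝ → ℝ) : ℝ :=
  ⨆ t : Set.Icc (0:ℝ) Tmax, Real.exp (-(M * t.1)) * |u t.1 - w t.1|

/-! At a fixed time `s`, the sets `S_s(z₁)` and `S_s(z₂)` differ only in pairs `(τ, ξ)` with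
`τ ∈ [0, s]` and `ξ` between `z₁(s) - z₁(τ)` and `z₂(s) - z₂(τ)`. Since
`|z₁ - z₂| ≤ e^{Mτ} d_M(z₁, z₂)`, this band has area at most `2 s e^{Ms} d_M(z₁, z₂)`, so the
density bound `F ≤ G λ₂` and the Lipschitz bound on `V` give
`|𝒰(z₁,F)(t) - 𝒰(z₂,F)(t)| ≤ 2 G Lip(V) d_M(z₁, z₂) ∫₀ᵗ s e^{Ms} ds`.
Finally `e^{-Mt} ∫₀ᵗ s e^{Ms} ds = (Mt - 1 + e^{-Mt}) / M²`, which increases with `t ≥ 0`. -/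

open scoped symmDiff Interval

theorem volume_band_le {a b C : ℝ} {f g : ℝ → ℝ} (hf : Measurable f) (hg : Measurable g)
    (hab : a ≤ b) (hfg : ∀ x ∈ Icc a b, |f x - g x| ≤ C) :
    volume {p : ℝ × ℝ | p.1 ∈ Icc a b ∧ p.2 ∈ Ι (f p.1) (g p.1)}
      ≤ ENNReal.ofReal ((b - a) * C) := by
  set E := {p : ℝ × ℝ | p.1 ∈ Icc a b ∧ p.2 ∈ Ι (f p.1) (g p.1)}
  have hE : MeasurableSet E :=
    measurableSet_region_between_oc (hf.min hg) (hf.max hg) measurableSet_Icc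
  have hsection : ∀ x, volume (Prod.mk x ⁻¹' E)
      ≤ (Icc a b).indicator (fun _ => ENNReal.ofReal C) x := by
    intro x
    by_cases hx : x ∈ Icc a b
    · rw [indicator_of_mem hx]
      calc volume (Prod.mk x ⁻¹' E) = volume (Ι (f x) (g x)) := by
            congr 1; ext y; simp only [E, mem_preimage, mem_ofPred_eq, hx, true_and]
        _ ≤ ENNReal.ofReal C := by
            rw [Real.volume_uIoc, abs_sub_comm]
            exact ENNReal.ofReal_le_ofReal (hfg x hx)
    · have : Prod.mk x ⁻¹' E = ∅ := by
        ext y; simp only [E, mem_preimage, mem_ofPred_eq, hx, false_and, mem_empty_iff_false]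
      simp [this]
  rw [Measure.volume_eq_prod, Measure.prod_apply hE]
  calc ∫⁻ x, volume (Prod.mk x ⁻¹' E)
      ≤ ∫⁻ x, (Icc a b).indicator (fun _ => ENNReal.ofReal C) x := lintegral_mono hsection
    _ = ENNReal.ofReal ((b - a) * C) := by
        rw [lintegral_indicator_const measurableSet_Icc, Real.volume_Icc,
          ENNReal.ofReal_mul (sub_nonneg.2 hab), mul_comm]

section Sset

variable {Td Xs : Set ℝ} {z w : ℝ → ℝ}

theorem Sset_symmDiff_subset (t : ℝ) :
    Sset Td Xs z t ∆ Sset Td Xs w t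
      ⊆ {p : ℝ × ℝ | p.1 ∈ Icc 0 t ∧ p.2 ∈ Ι (z t - z p.1) (w t - w p.1)} := by
  rintro ⟨τ, ξ⟩ (⟨⟨hτ, hzξ, hξ⟩, hw⟩ | ⟨⟨hτ, hwξ, hξ⟩, hz⟩)
  · exact ⟨hτ.1, Ioc_subset_uIoc ⟨hzξ, not_lt.1 fun h => hw ⟨hτ, h, hξ⟩⟩⟩
  · exact ⟨hτ.1, Ioc_subset_uIoc' ⟨hwξ, not_lt.1 fun h => hz ⟨hτ, h, hξ⟩⟩⟩

theorem measurableSet_Sset_graph (hTd : MeasurableSet Td) (hXs : MeasurableSet Xs)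
    (hz : Continuous z) : MeasurableSet {q : ℝ × (ℝ × ℝ) | q.2 ∈ Sset Td Xs z q.1} := by
  simp only [Sset, mem_ofPred_eq, mem_inter_iff, mem_Icc, mem_Ioi]
  measurability

theorem measurable_measureReal_Sset {F : Measure (ℝ × ℝ)} [SFinite F]
    (hTd : MeasurableSet Td) (hXs : MeasurableSet Xs) (hz : Continuous z) :
    Measurable fun t => F.real (Sset Td Xs z t) :=
  (measurable_measure_prodMk_left (measurableSet_Sset_graph hTd hXs hz)).ennreal_toReal

theorem intervalIntegrable_comp_measureReal_Sset {F : Measure (ℝ × ℝ)} [IsFiniteMeasure F]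
    {V : ℝ → ℝ} {LV : NNReal} (hV : LipschitzOnWith LV V (Ici 0))
    (hTd : MeasurableSet Td) (hXs : MeasurableSet Xs) (hz : Continuous z) (a b : ℝ) :
    IntervalIntegrable (fun t => V (F.real (Sset Td Xs z t))) volume a b := by
  obtain ⟨W, hW, hVW⟩ := hV.extend_real
  have hcomp : (fun t => V (F.real (Sset Td Xs z t))) = W ∘ fun t => F.real (Sset Td Xs z t) :=
    funext fun t => hVW measureReal_nonneg
  rw [hcomp]
  refine (intervalIntegrable_const (c := |W 0| + LV * F.real univ)).mono_fun'
    (hW.continuous.measurable.comp (measurable_measureReal_Sset hTd hXs hz)).aestronglyMeasurable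
    (ae_of_all _ fun t => ?_)
  set x := F.real (Sset Td Xs z t)
  have hx : |x| ≤ F.real univ := by
    rw [abs_of_nonneg measureReal_nonneg]; exact measureReal_mono (subset_univ _)
  have hLip : |W x - W 0| ≤ LV * |x| := by simpa [Real.dist_eq] using hW.dist_le_mul x 0
  calc ‖W x‖ ≤ |W 0| + |W x - W 0| := by
        rw [Real.norm_eq_abs]; linarith [abs_sub_abs_le_abs_sub (W x) (W 0)]
    _ ≤ |W 0| + LV * F.real univ := by gcongr; exact hLip.trans (by gcongr)

theorem abs_measureReal_Sset_sub_le {F : Measure (ℝ × ℝ)} [IsFiniteMeasure F] {G : ℝ}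
    (hG : 0 ≤ G)
    (hFle : ∀ B : Set (ℝ × ℝ), MeasurableSet B → F B ≤ ENNReal.ofReal G * volume B)
    (hTd : MeasurableSet Td) (hXs : MeasurableSet Xs) (hz : Continuous z) (hw : Continuous w)
    {t C : ℝ} (ht : 0 ≤ t) (hC : ∀ τ ∈ Icc 0 t, |(z t - z τ) - (w t - w τ)| ≤ C) :
    |F.real (Sset Td Xs z t) - F.real (Sset Td Xs w t)| ≤ G * (t * C) := by
  have hmeas : ∀ u : ℝ → ℝ, Continuous u → MeasurableSet (Sset Td Xs u t) := fun u hu =>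
    measurableSet_Sset_graph hTd hXs hu |>.preimage measurable_prodMk_left
  have hC0 : 0 ≤ C := (abs_nonneg _).trans (hC 0 ⟨le_rfl, ht⟩)
  have hband := volume_band_le (measurable_const.sub hz.measurable)
    (measurable_const.sub hw.measurable) ht (by simpa using hC)
  calc |F.real (Sset Td Xs z t) - F.real (Sset Td Xs w t)|
      ≤ F.real (Sset Td Xs z t ∆ Sset Td Xs w t) :=
        abs_measureReal_sub_le_measureReal_symmDiff (hmeas z hz).nullMeasurableSet
          (hmeas w hw).nullMeasurableSet
    _ ≤ G * (t * C) := by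
        refine ENNReal.toReal_le_of_le_ofReal (by positivity) ?_
        calc F (Sset Td Xs z t ∆ Sset Td Xs w t)
            ≤ ENNReal.ofReal G * volume (Sset Td Xs z t ∆ Sset Td Xs w t) :=
              hFle _ ((hmeas z hz).symmDiff (hmeas w hw))
          _ ≤ ENNReal.ofReal G * ENNReal.ofReal (t * C) := by
              gcongr
              exact (measure_mono (Sset_symmDiff_subset t)).trans (by simpa using hband)
          _ = ENNReal.ofReal (G * (t * C)) := (ENNReal.ofReal_mul hG).symm

end Sset

theorem abs_Umap_sub_le {Td Xs : Set ℝ} {F : Measure (ℝ × ℝ)} [IsFiniteMeasure F] {G : ℝ}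
    (hG : 0 ≤ G)
    (hFle : ∀ B : Set (ℝ × ℝ), MeasurableSet B → F B ≤ ENNReal.ofReal G * volume B)
    (hTd : MeasurableSet Td) (hXs : MeasurableSet Xs)
    {V : ℝ → ℝ} {LV : NNReal} (hV : LipschitzOnWith LV V (Ici 0))
    {z₁ z₂ : ℝ → ℝ} (hz₁ : Continuous z₁) (hz₂ : Continuous z₂)
    {M D t : ℝ} (hM : 0 ≤ M) (ht : 0 ≤ t)
    (hD : ∀ τ ∈ Icc 0 t, |z₁ τ - z₂ τ| ≤ D * Real.exp (M * τ)) :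
    |Umap Td Xs V F z₁ t - Umap Td Xs V F z₂ t|
      ≤ 2 * G * LV * D * ∫ s in (0:ℝ)..t, s * Real.exp (M * s) := by
  have hD0 : 0 ≤ D := by simpa using (abs_nonneg _).trans (hD 0 ⟨le_rfl, ht⟩)
  have hpointwise : ∀ s ∈ Icc 0 t,
      |V (F.real (Sset Td Xs z₁ s)) - V (F.real (Sset Td Xs z₂ s))|
        ≤ 2 * G * LV * D * (s * Real.exp (M * s)) := by
    intro s hs
    have hC : ∀ τ ∈ Icc 0 s,
        |(z₁ s - z₁ τ) - (z₂ s - z₂ τ)| ≤ 2 * D * Real.exp (M * s) := by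
      intro τ hτ
      have hexp : Real.exp (M * τ) ≤ Real.exp (M * s) := by gcongr; exact hτ.2
      calc |(z₁ s - z₁ τ) - (z₂ s - z₂ τ)|
          = |(z₁ s - z₂ s) - (z₁ τ - z₂ τ)| := by ring_nf
        _ ≤ |z₁ s - z₂ s| + |z₁ τ - z₂ τ| := abs_sub _ _
        _ ≤ D * Real.exp (M * s) + D * Real.exp (M * τ) :=
            add_le_add (hD s hs) (hD τ ⟨hτ.1, hτ.2.trans hs.2⟩)
        _ ≤ 2 * D * Real.exp (M * s) := by nlinarith
    have hLip := hV.dist_le_mul (F.real (Sset Td Xs z₁ s)) measureReal_nonneg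
      (F.real (Sset Td Xs z₂ s)) measureReal_nonneg
    rw [Real.dist_eq, Real.dist_eq] at hLip
    calc _ ≤ LV * |F.real (Sset Td Xs z₁ s) - F.real (Sset Td Xs z₂ s)| := hLip
      _ ≤ LV * (G * (s * (2 * D * Real.exp (M * s)))) := by
          gcongr; exact abs_measureReal_Sset_sub_le hG hFle hTd hXs hz₁ hz₂ hs.1 hC
      _ = 2 * G * LV * D * (s * Real.exp (M * s)) := by ring
  simp only [Umap, ← measureReal_def]
  rw [← intervalIntegral.integral_sub
    (intervalIntegrable_comp_measureReal_Sset hV hTd hXs hz₁ _ _)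
    (intervalIntegrable_comp_measureReal_Sset hV hTd hXs hz₂ _ _),
    ← intervalIntegral.integral_const_mul, ← Real.norm_eq_abs]
  refine intervalIntegral.norm_integral_le_of_norm_le ht
    (ae_of_all _ fun s hs => hpointwise s ⟨hs.1.le, hs.2⟩)
    ((by fun_prop : Continuous _).intervalIntegrable _ _)

section dM

variable {M Tmax : ℝ} {u w : ℝ → ℝ}

theorem dM_nonneg : 0 ≤ dM M Tmax u w :=
  Real.iSup_nonneg fun _ => by positivity

theorem dM_le {K : ℝ} (hK : 0 ≤ K)
    (h : ∀ t ∈ Icc 0 Tmax, Real.exp (-(M * t)) * |u t - w t| ≤ K) : dM M Tmax u w ≤ K :=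
  Real.iSup_le (fun t => h t t.2) hK

theorem abs_sub_le_dM_mul_exp (hu : ContinuousOn u (Icc 0 Tmax))
    (hw : ContinuousOn w (Icc 0 Tmax)) {t : ℝ} (ht : t ∈ Icc 0 Tmax) :
    |u t - w t| ≤ dM M Tmax u w * Real.exp (M * t) := by
  have hbdd : BddAbove (range fun s : Icc (0:ℝ) Tmax => Real.exp (-(M * s)) * |u s - w s|) := by
    have := isCompact_Icc.bddAbove_image
      (f := fun s => Real.exp (-(M * s)) * |u s - w s|) (by fun_prop)
    rwa [image_eq_range] at this
  have := le_ciSup hbdd ⟨t, ht⟩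
  rwa [Real.exp_neg, inv_mul_le_iff₀ (Real.exp_pos _), mul_comm] at this

end dM

theorem integral_mul_exp_mul {M : ℝ} (hM : M ≠ 0) (t : ℝ) :
    ∫ s in (0:ℝ)..t, s * Real.exp (M * s) = ((M * t - 1) * Real.exp (M * t) + 1) / M ^ 2 := by
  have hderiv : ∀ s ∈ uIcc 0 t, HasDerivAt (fun s => (M * s - 1) * Real.exp (M * s) / M ^ 2)
      (s * Real.exp (M * s)) s := by
    intro s _
    have := ((((hasDerivAt_id s).const_mul M).sub_const 1).mul
      ((hasDerivAt_id s).const_mul M).exp).div_const (M ^ 2)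
    refine this.congr_deriv ?_
    simp only [id, mul_one]
    field_simp
    ring
  rw [intervalIntegral.integral_eq_sub_of_hasDerivAt hderiv
    ((by fun_prop : Continuous fun s => s * Real.exp (M * s)).intervalIntegrable _ _)]
  simp only [mul_zero, Real.exp_zero]
  ring

theorem monotoneOn_sub_one_add_exp_neg :
    MonotoneOn (fun x => x - 1 + Real.exp (-x)) (Ici 0) := by
  intro a ha b _ hab
  have hsplit : Real.exp (-b) = Real.exp (-a) * Real.exp (-(b - a)) := by
    rw [← Real.exp_add]; ring_nf
  have h1 : Real.exp (-a) ≤ 1 := Real.exp_le_one_iff.2 (by linarith [mem_Ici.1 ha])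
  have h2 : Real.exp (-(b - a)) ≤ 1 := Real.exp_le_one_iff.2 (by linarith)
  have h3 := Real.add_one_le_exp (-(b - a))
  simp only
  nlinarith [mul_nonneg (sub_nonneg.2 h1) (sub_nonneg.2 h2), Real.exp_pos (-a)]

theorem exp_neg_mul_integral_mul_exp_le {M t T : ℝ} (hM : 0 < M) (ht : t ∈ Icc 0 T) :
    Real.exp (-(M * t)) * ∫ s in (0:ℝ)..t, s * Real.exp (M * s)
      ≤ (M * T - 1 + Real.exp (-(M * T))) / M ^ 2 := by
  have hweight : Real.exp (-(M * t)) * ∫ s in (0:ℝ)..t, s * Real.exp (M * s)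
      = (M * t - 1 + Real.exp (-(M * t))) / M ^ 2 := by
    rw [integral_mul_exp_mul hM.ne', Real.exp_neg]; field_simp
  rw [hweight]
  gcongr ?_ / _
  exact monotoneOn_sub_one_add_exp_neg (by simpa using mul_nonneg hM.le ht.1)
    (by simpa using mul_nonneg hM.le (ht.1.trans ht.2)) (by gcongr; exact ht.2)

theorem Umap_contraction_estimate_general
    (Tmax Xmin Xmax G : ℝ)
    (hG : 0 < G)
    (Td Ta : Set ℝ) (hTdc : IsCompact Td)
    (m : Measure (ℝ × ℝ))
    (V : ℝ → ℝ) (LV : NNReal) (hV : LipschitzOnWith LV V (Set.Ici 0))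
    (F : Measure (ℝ × ℝ)) (hF : memP Td (Set.Icc Xmin Xmax) Ta m G F)
    (M : ℝ) (hM : 0 < M)
    (z₁ z₂ : ℝ → ℝ) (hz₁ : Continuous z₁) (hz₂ : Continuous z₂) :
    dM M Tmax (Umap Td (Set.Icc Xmin Xmax) V F z₁) (Umap Td (Set.Icc Xmin Xmax) V F z₂)
      ≤ (2 * G * (LV : ℝ) * (M * Tmax - 1 + Real.exp (-(M * Tmax))) / M ^ 2)
          * dM M Tmax z₁ z₂ := by
  obtain ⟨hFprob, -, hFle, -⟩ := hF
  set d := dM M Tmax z₁ z₂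
  have hd : 0 ≤ d := dM_nonneg
  have hweight_nonneg : 0 ≤ M * Tmax - 1 + Real.exp (-(M * Tmax)) := by
    linarith [Real.add_one_le_exp (-(M * Tmax))]
  refine dM_le (by positivity) fun t ht => ?_
  have hU := abs_Umap_sub_le hG.le hFle hTdc.measurableSet
    (measurableSet_Icc (a := Xmin) (b := Xmax)) hV hz₁ hz₂ hM.le ht.1 (D := d) fun τ hτ =>
      abs_sub_le_dM_mul_exp hz₁.continuousOn hz₂.continuousOn ⟨hτ.1, hτ.2.trans ht.2⟩
  calc _ ≤ Real.exp (-(M * t)) * (2 * G * LV * d * ∫ s in (0:ℝ)..t, s * Real.exp (M * s)) :=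
        by gcongr
    _ = 2 * G * LV * d * (Real.exp (-(M * t)) * ∫ s in (0:ℝ)..t, s * Real.exp (M * s)) :=
        by ring
    _ ≤ 2 * G * LV * d * ((M * Tmax - 1 + Real.exp (-(M * Tmax))) / M ^ 2) := by
        gcongr; exact exp_neg_mul_integral_mul_exp_le hM ht
    _ = _ := by ring

/-- Proof of Proposition 2: contraction estimate.
For every `M > 0`, every `F ∈ 𝒫_{m,G}` and all `z₁, z₂ ∈ C(𝒯)`,
`d_M(𝒰(z₁,F), 𝒰(z₂,F)) ≤ 2·G·Lip(V)·(M·Tmax − 1 + e^{−M·Tmax})/M² · d_M(z₁,z₂)`;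
in particular `z ↦ 𝒰(z,F)` is a contraction on `(C(𝒯), d_M)` whenever this factor is `< 1`. -/
theorem Umap_contraction_estimate
    (Tmax Xmin Xmax G : ℝ) (hT : 0 < Tmax) (hXmin : 0 < Xmin) (hXX : Xmin < Xmax)
    (hG : 0 < G)
    (Td Ta : Set ℝ) (hTdc : IsCompact Td) (hTd : Td ⊆ Set.Icc 0 Tmax)
    (hTac : IsCompact Ta) (hTa : Ta ⊆ Set.Icc 0 Tmax)
    (m : Measure (ℝ × ℝ)) (hm : IsProbabilityMeasure m)
    (V : ℝ → ℝ) (LV : NNReal) (hV : LipschitzOnWith LV V (Set.Ici 0))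
    (hVpos : ∀ c : ℝ, 0 ≤ c → 0 < V c)
    (F : Measure (ℝ × ℝ)) (hF : memP Td (Set.Icc Xmin Xmax) Ta m G F)
    (M : ℝ) (hM : 0 < M)
    (z₁ z₂ : ℝ → ℝ) (hz₁ : Continuous z₁) (hz₂ : Continuous z₂) :
    dM M Tmax (Umap Td (Set.Icc Xmin Xmax) V F z₁) (Umap Td (Set.Icc Xmin Xmax) V F z₂)
      ≤ (2 * G * (LV : ℝ) * (M * Tmax - 1 + Real.exp (-(M * Tmax))) / M ^ 2)
          * dM M Tmax z₁ z₂ :=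
  Umap_contraction_estimate_general Tmax Xmin Xmax G hG Td Ta hTdc m V LV hV F hF M hM z₁ z₂ hz₁ hz₂
end
end

section
/- For every in-flow measure F ∈ 𝒫_{m,G} and every Lipschitz continuous speed function V : [0,∞) → (0,∞), there exists a unique function z_F ∈ C(𝒯) satisfying z_F(t) = ∫₀ᵗ V(F(S_s(z_F))) ds for all t ∈ 𝒯, where S_t(z_F) := {(τ, ξ) : τ ∈ [0,t] ∩ 𝒯_d, ξ ∈ (z_F(t) − z_F(τ), ∞) ∩ 𝒳}. -/
open MeasureTheory Set Filter

noncomputable section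

/-!
Changing `z` by at most `δ` on `[0, s]` changes `S_s(z)` only inside a band of area `≤ 2 s δ`
around the graph of `τ ↦ z(s) - z(τ)`, and moving from time `b` to time `a` only inside the strip
`(b, a] × 𝒳`. The density bound `F ≤ G λ₂` therefore makes `s ↦ F(S_s(z))` continuous and
`z ↦ V(F(S_s(z)))` Lipschitz for the sup norm of `z` on `[0, s]`. Hence
`z ↦ (t ↦ ∫₀ᵗ V(F(S_s(z))) ds)` is a Volterra-type operator on `C([0, T])` whose `n`-th iterate is
`(KT)ⁿ / n!`-Lipschitz; some iterate is a contraction, and Banach's fixed point theorem applies.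
-/

open Function
open scoped Nat

/-- The estimate satisfied by `u ↦ (t ↦ ∫₀ᵗ f(u|[0,s]) ds)` when `f` is `K`-Lipschitz in the sup
norm on `[0,s]`, tested on power-law bounds. -/
def IsVolterraLipschitz {T : ℝ} (K : ℝ) (Φ : C(Icc (0:ℝ) T, ℝ) → C(Icc (0:ℝ) T, ℝ)) : Prop :=
  ∀ u w (n : ℕ) (c : ℝ), 0 ≤ c → (∀ t : Icc (0:ℝ) T, |u t - w t| ≤ c * (t : ℝ) ^ n) →
    ∀ t : Icc (0:ℝ) T, |Φ u t - Φ w t| ≤ K * c * (t : ℝ) ^ (n + 1) / (n + 1)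

namespace IsVolterraLipschitz

variable {T K : ℝ} {Φ : C(Icc (0:ℝ) T, ℝ) → C(Icc (0:ℝ) T, ℝ)}

lemma abs_iterate_apply_sub_le (hΦ : IsVolterraLipschitz K Φ) (hK : 0 ≤ K)
    (u w : C(Icc (0:ℝ) T, ℝ)) (n : ℕ) (t : Icc (0:ℝ) T) :
    |Φ^[n] u t - Φ^[n] w t| ≤ K ^ n * dist u w / n ! * (t : ℝ) ^ n := by
  induction n generalizing t with
  | zero => simpa [← Real.dist_eq] using ContinuousMap.dist_apply_le_dist t
  | succ n ih =>
    rw [iterate_succ_apply', iterate_succ_apply']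
    refine (hΦ _ _ n _ (by positivity) ih t).trans_eq ?_
    rw [Nat.factorial_succ]
    push_cast
    field_simp
    ring

lemma dist_iterate_le (hΦ : IsVolterraLipschitz K Φ) (hT : 0 ≤ T) (hK : 0 ≤ K)
    (u w : C(Icc (0:ℝ) T, ℝ)) (n : ℕ) :
    dist (Φ^[n] u) (Φ^[n] w) ≤ (K * T) ^ n / n ! * dist u w := by
  refine (ContinuousMap.dist_le (by positivity)).2 fun t => ?_
  rw [Real.dist_eq]
  calc |Φ^[n] u t - Φ^[n] w t| ≤ K ^ n * dist u w / n ! * (t : ℝ) ^ n :=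
        hΦ.abs_iterate_apply_sub_le hK u w n t
    _ ≤ K ^ n * dist u w / n ! * T ^ n := by gcongr; exacts [t.2.1, t.2.2]
    _ = (K * T) ^ n / n ! * dist u w := by ring

theorem existsUnique_isFixedPt (hΦ : IsVolterraLipschitz K Φ) (hT : 0 ≤ T) (hK : 0 ≤ K) :
    ∃! u, IsFixedPt Φ u := by
  obtain ⟨n, hn⟩ :=
    ((FloorSemiring.tendsto_pow_div_factorial_atTop (K * T)).eventually_lt_const one_pos).exists
  have hC : 0 ≤ (K * T) ^ n / n ! := by positivity
  have hcontr : ContractingWith ((K * T) ^ n / n !).toNNReal (Φ^[n]) :=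
    ⟨by rwa [← NNReal.coe_lt_coe, Real.coe_toNNReal _ hC],
      LipschitzWith.of_dist_le_mul fun u w => by
        rw [Real.coe_toNNReal _ hC]; exact hΦ.dist_iterate_le hT hK u w n⟩
  have : Nonempty C(Icc (0:ℝ) T, ℝ) := ⟨0⟩
  exact ⟨_, hcontr.isFixedPt_fixedPoint_iterate,
    fun u hu => hcontr.fixedPoint_unique (hu.iterate n)⟩

end IsVolterraLipschitz

theorem exists_unique_fixedPoint_of_volterra {U : (ℝ → ℝ) → ℝ → ℝ} {T K : ℝ}
    (hT : 0 ≤ T) (hK : 0 ≤ K) (hcont : ∀ z, Continuous z → ContinuousOn (U z) (Icc 0 T))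
    (hU : ∀ z w, Continuous z → Continuous w → ∀ (n : ℕ) (c : ℝ), 0 ≤ c →
      (∀ t ∈ Icc 0 T, |z t - w t| ≤ c * t ^ n) →
      ∀ t ∈ Icc 0 T, |U z t - U w t| ≤ K * c * t ^ (n + 1) / (n + 1)) :
    ∃ z : ℝ → ℝ, Continuous z ∧ (∀ t ∈ Icc 0 T, z t = U z t) ∧
      ∀ z' : ℝ → ℝ, Continuous z' → (∀ t ∈ Icc 0 T, z' t = U z' t) →
        ∀ t ∈ Icc 0 T, z' t = z t := by
  have hlocal : ∀ z w, Continuous z → Continuous w → EqOn z w (Icc 0 T) →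
      EqOn (U z) (U w) (Icc 0 T) := fun z w hz hw hzw t ht =>
    sub_eq_zero.1 <| abs_nonpos_iff.1 <| by
      simpa using hU z w hz hw 0 0 le_rfl (fun t ht => by simp [hzw ht]) t ht
  let ext (u : C(Icc (0:ℝ) T, ℝ)) : C(ℝ, ℝ) := ContinuousMap.IccExtend hT u
  have hext (u : C(Icc (0:ℝ) T, ℝ)) (t : Icc (0:ℝ) T) : ext u t = u t := by
    simp [ext, IccExtend_of_mem _ _ t.2]
  let Φ (u : C(Icc (0:ℝ) T, ℝ)) : C(Icc (0:ℝ) T, ℝ) :=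
    ⟨(Icc 0 T).domRestrict (U (ext u)), (hcont _ (ext u).continuous).domRestrict⟩
  have hΦ : IsVolterraLipschitz K Φ := fun u w n c hc h t =>
    hU _ _ (ext u).continuous (ext w).continuous n c hc
      (fun s hs => by simpa only [hext _ ⟨s, hs⟩] using h ⟨s, hs⟩) t t.2
  obtain ⟨u, hu, huniq⟩ := hΦ.existsUnique_isFixedPt hT hK
  refine ⟨ext u, (ext u).continuous, fun t ht => ?_, fun z' hz' hz'fix t ht => ?_⟩
  · rw [hext u ⟨t, ht⟩]
    exact (DFunLike.congr_fun hu _).symm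
  · let u' : C(Icc (0:ℝ) T, ℝ) := ⟨(Icc 0 T).domRestrict z', hz'.continuousOn.domRestrict⟩
    have hu' : IsFixedPt Φ u' := ContinuousMap.ext fun s => by
      change U (ext u') s = z' s
      rw [hlocal _ _ (ext u').continuous hz' (fun s hs => hext u' ⟨s, hs⟩) s.2, ← hz'fix s s.2]
    rw [hext u ⟨t, ht⟩, ← huniq u' hu']
    rfl

theorem prod_region_between_oc_eq_lintegral {α : Type*} [MeasurableSpace α] {μ : Measure α}
    {f g : α → ℝ} (hf : Measurable f) (hg : Measurable g) {s : Set α} (hs : MeasurableSet s) :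
    μ.prod volume {p : α × ℝ | p.1 ∈ s ∧ p.2 ∈ Ioc (f p.1) (g p.1)}
      = ∫⁻ x in s, ENNReal.ofReal (g x - f x) ∂μ := by
  rw [Measure.prod_apply (measurableSet_region_between_oc hf hg hs), ← lintegral_indicator hs]
  congr with x
  by_cases hx : x ∈ s
  · simp only [preimage, mem_ofPred_eq, hx, true_and, indicator_of_mem]
    exact Real.volume_Ioc
  · simp [hx]

lemma measureReal_le_mul_measureReal_of_le_smul {α : Type*} [MeasurableSpace α]
    {μ ν : Measure α} {G : ℝ} (hG : 0 ≤ G) (h : μ ≤ ENNReal.ofReal G • ν) {B : Set α}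
    (hB : ν B ≠ ⊤) : μ.real B ≤ G * ν.real B := by
  have hle : μ B ≤ ENNReal.ofReal G * ν B := Measure.le_iff'.1 h B
  simpa [Measure.real, ENNReal.toReal_mul, hG] using ENNReal.toReal_mono (by finiteness) hle

section Sset

variable {Td Xs : Set ℝ} {z w : ℝ → ℝ} {a b r : ℝ}

/-- Agents travelling at time `a` under `z` but not at time `b` under `w` either departed in
`(b, a]`, or have a trip length within `r` of the distance `z` lets them cover by time `a`. -/
lemma Sset_subset_union (h : ∀ τ ∈ Icc 0 a, w b - w τ ≤ z a - z τ + r) :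
    Sset Td Xs z a ⊆ Sset Td Xs w b ∪
      (Ioc b a ×ˢ Xs ∪ {p | p.1 ∈ Icc 0 a ∧ p.2 ∈ Ioc (z a - z p.1) (z a - z p.1 + r)}) := by
  rintro p ⟨⟨hpa, hpd⟩, hpz, hpX⟩
  by_cases hpb : p.1 ≤ b
  · by_cases hpw : w b - w p.1 < p.2
    · exact Or.inl ⟨⟨⟨hpa.1, hpb⟩, hpd⟩, hpw, hpX⟩
    · exact Or.inr (Or.inr ⟨hpa, hpz, by linarith [h p.1 hpa]⟩)
  · exact Or.inr (Or.inl ⟨⟨not_le.1 hpb, hpa.2⟩, hpX⟩)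

variable {F : Measure (ℝ × ℝ)} [IsFiniteMeasure F] {G : ℝ} {V : ℝ → ℝ} {LV : NNReal}

lemma measureReal_Sset_le (hG : 0 ≤ G) (hF : F ≤ ENNReal.ofReal G • volume)
    (hXs_fin : volume Xs ≠ ⊤) (hz : Measurable z) (hr : 0 ≤ r)
    (h : ∀ τ ∈ Icc 0 a, w b - w τ ≤ z a - z τ + r) :
    F.real (Sset Td Xs z a) ≤
      F.real (Sset Td Xs w b) + G * (|a - b| * volume.real Xs + |a| * r) := by
  set band := {p : ℝ × ℝ | p.1 ∈ Icc 0 a ∧ p.2 ∈ Ioc (z a - z p.1) (z a - z p.1 + r)}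
  have hf : Measurable fun τ => z a - z τ := measurable_const.sub hz
  have hband_vol : volume band = ENNReal.ofReal r * ENNReal.ofReal a := by
    rw [Measure.volume_eq_prod, prod_region_between_oc_eq_lintegral hf (hf.add_const r)
      measurableSet_Icc]
    simp [Real.volume_Icc]
  have hstrip : F.real (Ioc b a ×ˢ Xs) ≤ G * (|a - b| * volume.real Xs) := by
    refine (measureReal_le_mul_measureReal_of_le_smul hG hF ?_).trans ?_
    · rw [Measure.volume_eq_prod, Measure.prod_prod]
      exact ENNReal.mul_ne_top measure_Ioc_lt_top.ne hXs_fin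
    · rw [Measure.volume_eq_prod, measureReal_prod_prod, Real.volume_real_Ioc]
      gcongr
      exact max_le (le_abs_self _) (abs_nonneg _)
  have hband : F.real band ≤ G * (|a| * r) := by
    refine (measureReal_le_mul_measureReal_of_le_smul hG hF
      (by rw [hband_vol]; finiteness)).trans ?_
    rw [Measure.real, hband_vol, ENNReal.toReal_mul, ENNReal.toReal_ofReal hr,
      ENNReal.toReal_ofReal', mul_comm r]
    gcongr
    exact max_le (le_abs_self _) (abs_nonneg _)
  calc F.real (Sset Td Xs z a)
      ≤ F.real (Sset Td Xs w b) + (F.real (Ioc b a ×ˢ Xs) + F.real band) :=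
        (measureReal_mono (Sset_subset_union h)).trans <|
          (measureReal_union_le _ _).trans (by gcongr; exact measureReal_union_le _ _)
    _ ≤ F.real (Sset Td Xs w b) + G * (|a - b| * volume.real Xs + |a| * r) := by
        linarith

lemma abs_measureReal_Sset_sub_le_s2 (hG : 0 ≤ G) (hF : F ≤ ENNReal.ofReal G • volume)
    (hXs_fin : volume Xs ≠ ⊤) (hz : Measurable z) (hw : Measurable w)
    (hr : 0 ≤ r) (h : ∀ τ ∈ Icc 0 (max a b), |(z a - z τ) - (w b - w τ)| ≤ r) :
    |F.real (Sset Td Xs z a) - F.real (Sset Td Xs w b)| ≤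
      G * (|a - b| * volume.real Xs + max |a| |b| * r) := by
  have hza := measureReal_Sset_le (Td := Td) (w := w) (b := b) hG hF hXs_fin hz hr fun τ hτ =>
    by linarith [abs_le.1 (h τ ⟨hτ.1, hτ.2.trans (le_max_left a b)⟩)]
  have hwb := measureReal_Sset_le (Td := Td) (w := z) (b := a) hG hF hXs_fin hw hr fun τ hτ =>
    by linarith [abs_le.1 (h τ ⟨hτ.1, hτ.2.trans (le_max_right a b)⟩)]
  have ha : G * (|a| * r) ≤ G * (max |a| |b| * r) := by gcongr; exact le_max_left _ _
  have hb : G * (|b| * r) ≤ G * (max |a| |b| * r) := by gcongr; exact le_max_right _ _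
  rw [abs_sub_comm b a] at hwb
  exact abs_sub_le_iff.2 ⟨by linarith, by linarith⟩

lemma continuous_measureReal_Sset (hG : 0 ≤ G) (hF : F ≤ ENNReal.ofReal G • volume)
    (hXs_fin : volume Xs ≠ ⊤) (hz : Continuous z) :
    Continuous fun s => F.real (Sset Td Xs z s) := by
  refine continuous_iff_continuousAt.2 fun b => tendsto_iff_dist_tendsto_zero.2 ?_
  refine squeeze_zero (fun _ => dist_nonneg) (fun a => ?_)
    (g := fun a => G * (|a - b| * volume.real Xs + max |a| |b| * |z a - z b|)) ?_
  · exact abs_measureReal_Sset_sub_le_s2 hG hF hXs_fin hz.measurable hz.measurable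
      (abs_nonneg _) fun τ _ => le_of_eq (by ring_nf)
  · simpa using ((by fun_prop : Continuous fun a =>
      G * (|a - b| * volume.real Xs + max |a| |b| * |z a - z b|)).tendsto b)


lemma continuous_comp_measureReal_Sset (hG : 0 ≤ G) (hF : F ≤ ENNReal.ofReal G • volume)
    (hXs_fin : volume Xs ≠ ⊤) (hV : LipschitzOnWith LV V (Ici 0)) (hz : Continuous z) :
    Continuous fun s => V (F.real (Sset Td Xs z s)) :=
  hV.continuousOn.comp_continuous (continuous_measureReal_Sset hG hF hXs_fin hz)
    fun _ => measureReal_nonneg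

lemma abs_comp_measureReal_Sset_sub_le (hG : 0 ≤ G) (hF : F ≤ ENNReal.ofReal G • volume)
    (hXs_fin : volume Xs ≠ ⊤) (hV : LipschitzOnWith LV V (Ici 0))
    (hz : Measurable z) (hw : Measurable w) {s δ : ℝ} (hδ : 0 ≤ δ)
    (h : ∀ τ ∈ Icc 0 s, |z τ - w τ| ≤ δ) :
    |V (F.real (Sset Td Xs z s)) - V (F.real (Sset Td Xs w s))| ≤ 2 * LV * G * |s| * δ := by
  have hS := abs_measureReal_Sset_sub_le_s2 (Td := Td) (a := s) (b := s) hG hF hXs_fin hz hw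
    (by positivity : 0 ≤ 2 * δ) fun τ hτ => by
      rw [max_self] at hτ
      calc |(z s - z τ) - (w s - w τ)| = |(z s - w s) - (z τ - w τ)| := by ring_nf
        _ ≤ |z s - w s| + |z τ - w τ| := abs_sub _ _
        _ ≤ 2 * δ := by linarith [h s ⟨hτ.1.trans hτ.2, le_rfl⟩, h τ hτ]
  simp only [sub_self, abs_zero, zero_mul, zero_add, max_self] at hS
  calc |V (F.real (Sset Td Xs z s)) - V (F.real (Sset Td Xs w s))|
      ≤ LV * |F.real (Sset Td Xs z s) - F.real (Sset Td Xs w s)| := by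
        simpa only [Real.dist_eq] using
          hV.dist_le_mul _ (mem_Ici.2 measureReal_nonneg) _ (mem_Ici.2 measureReal_nonneg)
    _ ≤ LV * (G * (|s| * (2 * δ))) := by gcongr
    _ = 2 * LV * G * |s| * δ := by ring

lemma continuous_Umap (hG : 0 ≤ G) (hF : F ≤ ENNReal.ofReal G • volume)
    (hXs_fin : volume Xs ≠ ⊤) (hV : LipschitzOnWith LV V (Ici 0)) (hz : Continuous z) :
    Continuous (Umap Td Xs V F z) :=
  intervalIntegral.continuous_primitive
    (fun _ _ => (continuous_comp_measureReal_Sset hG hF hXs_fin hV hz).intervalIntegrable _ _) 0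

lemma abs_Umap_sub_le_s2 (hG : 0 ≤ G) (hF : F ≤ ENNReal.ofReal G • volume)
    (hXs_fin : volume Xs ≠ ⊤) (hV : LipschitzOnWith LV V (Ici 0))
    (hz : Continuous z) (hw : Continuous w) {T c t : ℝ} {n : ℕ} (hc : 0 ≤ c)
    (h : ∀ t ∈ Icc 0 T, |z t - w t| ≤ c * t ^ n) (ht : t ∈ Icc 0 T) :
    |Umap Td Xs V F z t - Umap Td Xs V F w t| ≤ 2 * LV * G * T * c * t ^ (n + 1) / (n + 1) := by
  set f := fun u s => V (F.real (Sset Td Xs u s))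
  have hfz : IntervalIntegrable (f z) volume 0 t :=
    (continuous_comp_measureReal_Sset hG hF hXs_fin hV hz).intervalIntegrable _ _
  have hfw : IntervalIntegrable (f w) volume 0 t :=
    (continuous_comp_measureReal_Sset hG hF hXs_fin hV hw).intervalIntegrable _ _
  have hpt : ∀ s ∈ Icc 0 t, |f z s - f w s| ≤ 2 * LV * G * T * c * s ^ n := fun s hs => by
    have hcs : 0 ≤ c * s ^ n := mul_nonneg hc (pow_nonneg hs.1 n)
    refine (abs_comp_measureReal_Sset_sub_le hG hF hXs_fin hV hz.measurable hw.measurable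
      hcs fun τ hτ => (h τ ⟨hτ.1, hτ.2.trans (hs.2.trans ht.2)⟩).trans ?_).trans ?_
    · gcongr
      exacts [hτ.1, hτ.2]
    · rw [abs_of_nonneg hs.1, mul_assoc _ c]
      exact mul_le_mul_of_nonneg_right (by gcongr; exact hs.2.trans ht.2) hcs
  calc |Umap Td Xs V F z t - Umap Td Xs V F w t| = |∫ s in 0..t, (f z s - f w s)| := by
        rw [intervalIntegral.integral_sub hfz hfw]; rfl
    _ ≤ ∫ s in 0..t, |f z s - f w s| := intervalIntegral.abs_integral_le_integral_abs ht.1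
    _ ≤ ∫ s in 0..t, 2 * LV * G * T * c * s ^ n :=
        intervalIntegral.integral_mono_on ht.1 (hfz.sub hfw).abs
          (Continuous.intervalIntegrable (by fun_prop) _ _) hpt
    _ = 2 * LV * G * T * c * t ^ (n + 1) / (n + 1) := by
        rw [intervalIntegral.integral_const_mul, integral_pow]
        rw [zero_pow n.succ_ne_zero, sub_zero]
        ring

end Sset

theorem exists_unique_characteristic_travel_distance_general
    (Tmax Xmin Xmax G : ℝ) (hT : 0 < Tmax)
    (hG : 0 < G)
    (Td Ta : Set ℝ)
    (m : Measure (ℝ × ℝ))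
    (V : ℝ → ℝ) (LV : NNReal) (hV : LipschitzOnWith LV V (Set.Ici 0))
    (F : Measure (ℝ × ℝ)) (hF : memP Td (Set.Icc Xmin Xmax) Ta m G F) :
    ∃ z : ℝ → ℝ, Continuous z ∧
      (∀ t ∈ Set.Icc (0:ℝ) Tmax, z t = Umap Td (Set.Icc Xmin Xmax) V F z t) ∧
      ∀ z' : ℝ → ℝ, Continuous z' →
        (∀ t ∈ Set.Icc (0:ℝ) Tmax, z' t = Umap Td (Set.Icc Xmin Xmax) V F z' t) →
        ∀ t ∈ Set.Icc (0:ℝ) Tmax, z' t = z t := by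
  obtain ⟨hFprob, -, hFle, -⟩ := hF
  have hF : F ≤ ENNReal.ofReal G • volume :=
    Measure.le_iff.2 fun B hB => by simpa using hFle B hB
  have hX_fin : volume (Icc Xmin Xmax) ≠ ⊤ := measure_Icc_lt_top.ne
  exact exists_unique_fixedPoint_of_volterra hT.le (K := 2 * LV * G * Tmax) (by positivity)
    (fun z hz => (continuous_Umap hG.le hF hX_fin hV hz).continuousOn)
    (fun z w hz hw n c hc h t ht => abs_Umap_sub_le_s2 hG.le hF hX_fin hV hz hw hc h ht)

/-- Proposition 2: existence and uniqueness of the characteristic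
travel distance. For every in-flow measure `F ∈ 𝒫_{m,G}` and every Lipschitz
continuous speed function `V : [0,∞) → (0,∞)`, there is a unique `z_F ∈ C(𝒯)` with
`z_F(t) = ∫₀ᵗ V(F(S_s(z_F))) ds` for all `t ∈ 𝒯`. -/
theorem exists_unique_characteristic_travel_distance
    (Tmax Xmin Xmax G : ℝ) (hT : 0 < Tmax) (hXmin : 0 < Xmin) (hXX : Xmin < Xmax)
    (hG : 0 < G)
    (Td Ta : Set ℝ) (hTdc : IsCompact Td) (hTd : Td ⊆ Set.Icc 0 Tmax)
    (hTac : IsCompact Ta) (hTa : Ta ⊆ Set.Icc 0 Tmax)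
    (m : Measure (ℝ × ℝ)) (hm : IsProbabilityMeasure m)
    (V : ℝ → ℝ) (LV : NNReal) (hV : LipschitzOnWith LV V (Set.Ici 0))
    (hVpos : ∀ c : ℝ, 0 ≤ c → 0 < V c)
    (F : Measure (ℝ × ℝ)) (hF : memP Td (Set.Icc Xmin Xmax) Ta m G F) :
    ∃ z : ℝ → ℝ, Continuous z ∧
      (∀ t ∈ Set.Icc (0:ℝ) Tmax, z t = Umap Td (Set.Icc Xmin Xmax) V F z t) ∧
      ∀ z' : ℝ → ℝ, Continuous z' →
        (∀ t ∈ Set.Icc (0:ℝ) Tmax, z' t = Umap Td (Set.Icc Xmin Xmax) V F z' t) →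
        ∀ t ∈ Set.Icc (0:ℝ) Tmax, z' t = z t :=
  exists_unique_characteristic_travel_distance_general Tmax Xmin Xmax G hT hG Td Ta m V LV hV F hF
end
end
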